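/- For every real ε > 0 there exists D such that for every integer d ≥ D there exist a finite group G and a subset S ⊆ G with 1 ∉ S and |S| = d (S not required to be inverse-closed), such that every element of G can be expressed as a product of at most 3 elements of S, and |G| ≥ (48/4³ − ε)·d³. (This expresses the paper's result that in the class of directed Cayley graphs L⁻(3) ≥ 48/4³ = 0.75.) -/
import Mathlib


/-- A witness for a Cayley graph of diameter at most `k`: a finite group `G`
together with a subset `S ⊆ G` (as a `Finset`) with `1 ∉ S`, such that every
element of `G` can be expressed as a product of at most `k` elements of `S`.
The corresponding Cayley graph `Cay(G,S)` has order `|G|`, degree `|S|`, and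
diameter at most `k`. -/
structure CayleySpec (k : ℕ) where
  G : Type
  [grp : Group G]
  [fin : Finite G]
  S : Finset G
  one_not_mem : (1 : G) ∉ S
  covers : ∀ g : G, ∃ l : List G, l.length ≤ k ∧ (∀ x ∈ l, x ∈ S) ∧ l.prod = g

attribute [instance] CayleySpec.grp CayleySpec.fin

namespace DirCay

/-- Sign as an integer. -/
def sgn (b : Bool) : ℤ := bif b then -1 else 1

lemma sgn_xor (a b : Bool) : sgn (xor a b) = sgn a * sgn b := by
  cases a <;> cases b <;> rfl

/-- The hyperoctahedral group `B₃` of signed permutations of three coordinates. -/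
structure H3 where
  s : Fin 3 → Bool
  p : Equiv.Perm (Fin 3)

lemma H3.mk_eq {a b : H3} (h1 : a.s = b.s) (h2 : a.p = b.p) : a = b := by
  cases a; cases b; cases h1; cases h2; rfl

instance : DecidableEq H3 := fun a b =>
  decidable_of_iff ((∀ i, a.s i = b.s i) ∧ ∀ i, a.p i = b.p i)
    ⟨fun h => H3.mk_eq (funext h.1) (Equiv.ext h.2),
     fun h => by subst h; exact ⟨fun _ => rfl, fun _ => rfl⟩⟩

instance : Mul H3 := ⟨fun a b => ⟨fun i => xor (a.s i) (b.s (a.p⁻¹ i)), a.p * b.p⟩⟩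
instance : One H3 := ⟨⟨fun _ => false, 1⟩⟩
instance : Inv H3 := ⟨fun a => ⟨fun i => a.s (a.p i), a.p⁻¹⟩⟩

lemma H3.mul_s (a b : H3) : (a * b).s = fun i => xor (a.s i) (b.s (a.p⁻¹ i)) := rfl
lemma H3.mul_p (a b : H3) : (a * b).p = a.p * b.p := rfl
lemma H3.one_s : (1 : H3).s = fun _ => false := rfl
lemma H3.one_p : (1 : H3).p = 1 := rfl
lemma H3.inv_s (a : H3) : (a⁻¹).s = fun i => a.s (a.p i) := rfl
lemma H3.inv_p (a : H3) : (a⁻¹).p = a.p⁻¹ := rfl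

instance : Group H3 :=
  Group.ofLeftAxioms
    (fun a b c => by
      refine H3.mk_eq (funext fun i => ?_) ?_
      · simp [H3.mul_s, H3.mul_p, Equiv.Perm.mul_apply, mul_inv_rev, Bool.xor_assoc]
      · simp [H3.mul_p, mul_assoc])
    (fun a => by
      refine H3.mk_eq (funext fun i => ?_) ?_ <;>
        simp [H3.mul_s, H3.mul_p, H3.one_s, H3.one_p])
    (fun a => by
      refine H3.mk_eq (funext fun i => ?_) ?_ <;>
        simp [H3.mul_s, H3.mul_p, H3.inv_s, H3.inv_p, H3.one_s, H3.one_p])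

/-- `H3` is equivalent to a product. -/
def h3Equiv : H3 ≃ (Fin 3 → Bool) × Equiv.Perm (Fin 3) :=
  ⟨fun a => (a.s, a.p), fun x => ⟨x.1, x.2⟩, fun _ => rfl, fun _ => rfl⟩

instance : Finite H3 := Finite.of_equiv _ h3Equiv.symm

lemma card_H3 : Nat.card H3 = 48 := by
  rw [Nat.card_congr h3Equiv, Nat.card_prod, Nat.card_eq_fintype_card,
    Nat.card_eq_fintype_card, Fintype.card_fun, Fintype.card_perm]
  norm_num [Nat.factorial]

/-- Action of `H3` on integer vectors. -/
def actZ (h : H3) (w : Fin 3 → ℤ) : Fin 3 → ℤ := fun i => sgn (h.s i) * w (h.p⁻¹ i)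

/-- The semidirect product `(ZMod m)³ ⋊ B₃`. -/
structure SP (m : ℕ) where
  h : H3
  v : Fin 3 → ZMod m
deriving DecidableEq

variable {m : ℕ}

lemma SP.mk_eq {a b : SP m} (h1 : a.h = b.h) (h2 : a.v = b.v) : a = b := by
  cases a; cases b; cases h1; cases h2; rfl

/-- Action of `H3` on vectors over `ZMod m`. -/
def SP.act (h : H3) (w : Fin 3 → ZMod m) : Fin 3 → ZMod m :=
  fun i => ((sgn (h.s i) : ℤ) : ZMod m) * w (h.p⁻¹ i)

lemma SP.act_one (w : Fin 3 → ZMod m) : SP.act 1 w = w := by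
  funext i; simp [SP.act, H3.one_s, H3.one_p, sgn]

lemma SP.act_mul (a b : H3) (w : Fin 3 → ZMod m) :
    SP.act (a * b) w = SP.act a (SP.act b w) := by
  funext i
  simp only [SP.act, H3.mul_s, H3.mul_p, sgn_xor, mul_inv_rev,
    Equiv.Perm.mul_apply, Int.cast_mul]
  ring

lemma SP.act_add (h : H3) (v w : Fin 3 → ZMod m) :
    SP.act h (v + w) = SP.act h v + SP.act h w := by
  funext i; simp [SP.act]; ring

instance : Mul (SP m) := ⟨fun a b => ⟨a.h * b.h, a.v + SP.act a.h b.v⟩⟩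
instance : One (SP m) := ⟨⟨1, 0⟩⟩
instance : Inv (SP m) := ⟨fun a => ⟨a.h⁻¹, -(SP.act a.h⁻¹ a.v)⟩⟩

lemma SP.mul_h (a b : SP m) : (a * b).h = a.h * b.h := rfl
lemma SP.mul_v (a b : SP m) : (a * b).v = a.v + SP.act a.h b.v := rfl
lemma SP.one_h : (1 : SP m).h = 1 := rfl
lemma SP.one_v : (1 : SP m).v = 0 := rfl
lemma SP.inv_h (a : SP m) : (a⁻¹).h = a.h⁻¹ := rfl
lemma SP.inv_v (a : SP m) : (a⁻¹).v = -(SP.act a.h⁻¹ a.v) := rfl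

instance : Group (SP m) :=
  Group.ofLeftAxioms
    (fun a b c =>
      SP.mk_eq (mul_assoc _ _ _) (by
        simp only [SP.mul_v, SP.mul_h, SP.act_mul, SP.act_add, add_assoc]))
    (fun a =>
      SP.mk_eq (one_mul _) (by
        simp only [SP.mul_v, SP.one_h, SP.one_v, SP.act_one, zero_add]))
    (fun a =>
      SP.mk_eq (inv_mul_cancel _) (by
        simp only [SP.mul_v, SP.inv_h, SP.inv_v, SP.one_v, neg_add_cancel]))

/-- `SP m` is equivalent to a product. -/
def spEquiv (m : ℕ) : SP m ≃ H3 × (Fin 3 → ZMod m) :=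
  ⟨fun a => (a.h, a.v), fun x => ⟨x.1, x.2⟩, fun _ => rfl, fun _ => rfl⟩

instance [NeZero m] : Finite (SP m) := Finite.of_equiv _ (spEquiv m).symm

lemma card_SP [NeZero m] : Nat.card (SP m) = 48 * m ^ 3 := by
  rw [Nat.card_congr (spEquiv m), Nat.card_prod, card_H3]
  have h2 : Nat.card (Fin 3 → ZMod m) = m ^ 3 := by
    rw [Nat.card_eq_fintype_card, Fintype.card_fun, ZMod.card, Fintype.card_fin]
  rw [h2]

/-- 3×3 determinant. -/
def det3 {R : Type} [CommRing R] (a b c : Fin 3 → R) : R :=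
  a 0 * (b 1 * c 2 - b 2 * c 1) - a 1 * (b 0 * c 2 - b 2 * c 0)
    + a 2 * (b 0 * c 1 - b 1 * c 0)

/-- Cramer's rule solvability when the determinant squares to 1. -/
lemma solve3 {R : Type} [CommRing R] (w1 w2 w3 : Fin 3 → R)
    (hd : det3 w1 w2 w3 * det3 w1 w2 w3 = 1) (v1 v2 v3 : R) :
    ∃ x y z : R,
      x * w1 0 + (y * w2 0 + z * w3 0) = v1 ∧
      x * w1 1 + (y * w2 1 + z * w3 1) = v2 ∧
      x * w1 2 + (y * w2 2 + z * w3 2) = v3 := by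
  simp only [det3] at hd
  refine ⟨(w1 0 * (w2 1 * w3 2 - w2 2 * w3 1) - w1 1 * (w2 0 * w3 2 - w2 2 * w3 0)
      + w1 2 * (w2 0 * w3 1 - w2 1 * w3 0)) *
      (v1 * (w2 1 * w3 2 - w2 2 * w3 1) - v2 * (w2 0 * w3 2 - w2 2 * w3 0)
      + v3 * (w2 0 * w3 1 - w2 1 * w3 0)),
    (w1 0 * (w2 1 * w3 2 - w2 2 * w3 1) - w1 1 * (w2 0 * w3 2 - w2 2 * w3 0)
      + w1 2 * (w2 0 * w3 1 - w2 1 * w3 0)) *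
      (w1 0 * (v2 * w3 2 - v3 * w3 1) - w1 1 * (v1 * w3 2 - v3 * w3 0)
      + w1 2 * (v1 * w3 1 - v2 * w3 0)),
    (w1 0 * (w2 1 * w3 2 - w2 2 * w3 1) - w1 1 * (w2 0 * w3 2 - w2 2 * w3 0)
      + w1 2 * (w2 0 * w3 1 - w2 1 * w3 0)) *
      (w1 0 * (w2 1 * v3 - w2 2 * v2) - w1 1 * (w2 0 * v3 - w2 2 * v1)
      + w1 2 * (w2 0 * v2 - w2 1 * v1)), ?_, ?_, ?_⟩
  · linear_combination v1 * hd
  · linear_combination v2 * hd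
  · linear_combination v3 * hd

/-- Cast an integer vector to `ZMod m`. -/
def castV (w : Fin 3 → ℤ) : Fin 3 → ZMod m := fun r => ((w r : ℤ) : ZMod m)

lemma det3_cast (a b c : Fin 3 → ℤ) :
    det3 (castV (m := m) a) (castV b) (castV c) = ((det3 a b c : ℤ) : ZMod m) := by
  simp only [det3, castV]
  push_cast
  ring

/-- The permutation `(0)(1 2)`. -/
def pA : Equiv.Perm (Fin 3) := ⟨![0, 2, 1], ![0, 2, 1], by decide, by decide⟩
/-- The permutation `(0 1 2)`, sending `0 ↦ 1 ↦ 2 ↦ 0`. -/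
def pB : Equiv.Perm (Fin 3) := ⟨![1, 2, 0], ![2, 0, 1], by decide, by decide⟩
/-- The permutation `(0 1)`. -/
def pC : Equiv.Perm (Fin 3) := ⟨![1, 0, 2], ![1, 0, 2], by decide, by decide⟩
/-- The permutation `(0 2)`. -/
def pD : Equiv.Perm (Fin 3) := ⟨![2, 1, 0], ![2, 1, 0], by decide, by decide⟩
/-- The permutation `(0 2 1)`. -/
def pE : Equiv.Perm (Fin 3) := ⟨![2, 0, 1], ![1, 2, 0], by decide, by decide⟩

/-- The four generators in `B₃`. -/
def Tg : Fin 4 → H3 :=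
  ![⟨![false, false, false], pA⟩,
    ⟨![false, false, false], pB⟩,
    ⟨![true, false, false], pB⟩,
    ⟨![true, true, false], pA⟩]

/-- The direction of the line of generators (in `(ZMod m)³`) attached to each
element of `Tg`. -/
def dirZ : Fin 4 → Fin 3 → ℤ := ![![1, -1, 0], ![0, 1, 0], ![0, 1, 0], ![1, -1, 0]]

/-- Elements used for padding the generating set. -/
def Ug : Fin 3 → H3 :=
  ![⟨![false, false, false], pC⟩,
    ⟨![false, false, false], pD⟩,
    ⟨![false, false, false], pE⟩]

lemma key' : ∀ (s : Fin 3 → Bool) (pv : Fin 3 → Fin 3),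
    (∀ a b : Fin 3, pv a = pv b → a = b) →
    ∃ i j k : Fin 4,
      ((∀ r, (Tg i * Tg j * Tg k).s r = s r) ∧ ∀ r, (Tg i * Tg j * Tg k).p r = pv r) ∧
      det3 (dirZ i) (actZ (Tg i) (dirZ j)) (actZ (Tg i * Tg j) (dirZ k)) *
        det3 (dirZ i) (actZ (Tg i) (dirZ j)) (actZ (Tg i * Tg j) (dirZ k)) = 1 := by
  decide

lemma key (h : H3) : ∃ i j k : Fin 4,
    Tg i * Tg j * Tg k = h ∧
    det3 (dirZ i) (actZ (Tg i) (dirZ j)) (actZ (Tg i * Tg j) (dirZ k)) *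
      det3 (dirZ i) (actZ (Tg i) (dirZ j)) (actZ (Tg i * Tg j) (dirZ k)) = 1 := by
  obtain ⟨i, j, k, ⟨h1, h2⟩, h3⟩ := key' h.s h.p (fun a b hab => h.p.injective hab)
  exact ⟨i, j, k, H3.mk_eq (funext h1) (Equiv.ext h2), h3⟩

lemma Tg_inj : Function.Injective Tg := by decide

lemma Tg_ne_one : ∀ i, Tg i ≠ 1 := by decide

lemma dir_one : ∀ i : Fin 4, ∃ r, dirZ i r = 1 := by decide

lemma Ug_inj : Function.Injective Ug := by decide

lemma Ug_ne_one : ∀ j, Ug j ≠ 1 := by decide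

lemma Ug_ne_Tg : ∀ j i, Ug j ≠ Tg i := by decide

/-- A generator of the Cayley graph. -/
def gen (m : ℕ) (x : ZMod m) (i : Fin 4) : SP m := ⟨Tg i, fun r => x * castV (dirZ i) r⟩

/-- The main part of the connection set: four lines of generators. -/
def S0 (m : ℕ) [NeZero m] : Finset (SP m) :=
  (Finset.univ : Finset (ZMod m × Fin 4)).image fun q => gen m q.1 q.2

/-- Padding part of the connection set. -/
def padS (m : ℕ) (r : ℕ) : Finset (SP m) :=
  (Finset.univ.filter fun j : Fin 3 => (j : ℕ) < r).image fun j => (⟨Ug j, 0⟩ : SP m)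

lemma act_cast (h : H3) (y : ZMod m) (w : Fin 3 → ℤ) :
    SP.act h (fun r => y * castV w r) = fun r => y * castV (actZ h w) r := by
  funext r
  simp only [SP.act, actZ, castV]
  push_cast
  ring

lemma gen_inj (m : ℕ) [NeZero m] :
    Function.Injective (fun q : ZMod m × Fin 4 => gen m q.1 q.2) := by
  rintro ⟨x, i⟩ ⟨x', i'⟩ hq
  have hh : Tg i = Tg i' := congrArg SP.h hq
  have hi : i = i' := Tg_inj hh
  subst hi
  obtain ⟨r, hr⟩ := dir_one i
  have hv : (fun r => x * castV (dirZ i) r) = fun r => x' * castV (dirZ i) r :=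
    congrArg SP.v hq
  have := congrFun hv r
  simp only [castV, hr] at this
  simp only [Int.cast_one, mul_one] at this
  simp [this]

lemma covers_lemma (m : ℕ) [NeZero m] (g : SP m) :
    ∃ l : List (SP m), l.length ≤ 3 ∧ (∀ x ∈ l, x ∈ S0 m) ∧ l.prod = g := by
  obtain ⟨i, j, k, hp, hd⟩ := key g.h
  have hd' : det3 (castV (m := m) (dirZ i)) (castV (actZ (Tg i) (dirZ j)))
      (castV (actZ (Tg i * Tg j) (dirZ k))) *
      det3 (castV (dirZ i)) (castV (actZ (Tg i) (dirZ j)))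
      (castV (actZ (Tg i * Tg j) (dirZ k))) = 1 := by
    rw [det3_cast, ← Int.cast_mul, hd, Int.cast_one]
  obtain ⟨x, y, z, e0, e1, e2⟩ := solve3 _ _ _ hd' (g.v 0) (g.v 1) (g.v 2)
  refine ⟨[gen m x i, gen m y j, gen m z k], by simp, ?_, ?_⟩
  · intro a ha
    simp only [List.mem_cons, List.not_mem_nil, or_false] at ha
    rcases ha with h | h | h <;> subst h
    · exact Finset.mem_image_of_mem _ (Finset.mem_univ (x, i))
    · exact Finset.mem_image_of_mem _ (Finset.mem_univ (y, j))
    · exact Finset.mem_image_of_mem _ (Finset.mem_univ (z, k))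
  · have hprod : ([gen m x i, gen m y j, gen m z k] : List (SP m)).prod
        = gen m x i * (gen m y j * gen m z k) := by simp
    rw [hprod]
    refine SP.mk_eq ?_ ?_
    · show Tg i * (Tg j * Tg k) = g.h
      rw [← mul_assoc]; exact hp
    · show (fun r => x * castV (dirZ i) r) + SP.act (Tg i)
          ((fun r => y * castV (dirZ j) r) + SP.act (Tg j) (fun r => z * castV (dirZ k) r))
        = g.v
      rw [SP.act_add, ← SP.act_mul, act_cast, act_cast]
      funext r
      fin_cases r
      · exact e0
      · exact e1
      · exact e2

lemma card_filter_lt (r : ℕ) (hr : r < 4) :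
    (Finset.univ.filter fun j : Fin 3 => (j : ℕ) < r).card = min r 3 := by
  interval_cases r <;> decide

theorem main_construction (m : ℕ) [NeZero m] (r : ℕ) (hr : r ≤ 3) :
    ∃ spec : CayleySpec 3,
      spec.S.card = 4 * m + r ∧ Nat.card spec.G = 48 * m ^ 3 := by
  have hdisj : Disjoint (S0 m) (padS m r) := by
    rw [Finset.disjoint_left]
    intro a haS hap
    obtain ⟨q, -, hq⟩ := Finset.mem_image.mp haS
    obtain ⟨j, -, hj⟩ := Finset.mem_image.mp hap
    have : Ug j = Tg q.2 := congrArg SP.h (hj.trans hq.symm)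
    exact Ug_ne_Tg j q.2 this
  refine ⟨{ G := SP m, grp := inferInstance, fin := inferInstance,
            S := S0 m ∪ padS m r,
            one_not_mem := ?_,
            covers := ?_ }, ?_, ?_⟩
  · intro hmem
    rcases Finset.mem_union.mp hmem with h | h
    · obtain ⟨q, -, hq⟩ := Finset.mem_image.mp h
      exact Tg_ne_one q.2 (congrArg SP.h hq)
    · obtain ⟨j, -, hj⟩ := Finset.mem_image.mp h
      exact Ug_ne_one j (congrArg SP.h hj)
  · intro g
    obtain ⟨l, hl, hmem, hprod⟩ := covers_lemma m g
    exact ⟨l, hl, fun x hx => Finset.mem_union_left _ (hmem x hx), hprod⟩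
  · show (S0 m ∪ padS m r).card = 4 * m + r
    rw [Finset.card_union_of_disjoint hdisj]
    have h1 : (S0 m).card = 4 * m := by
      rw [S0, Finset.card_image_of_injective _ (gen_inj m), Finset.card_univ,
        Fintype.card_prod, ZMod.card, Fintype.card_fin]
      ring
    have h2 : (padS m r).card = r := by
      rw [padS, Finset.card_image_of_injective, card_filter_lt r (by omega)]
      · omega
      · intro a b hab
        exact Ug_inj (congrArg SP.h hab)
    rw [h1, h2]
  · show Nat.card (SP m) = 48 * m ^ 3
    exact card_SP

end DirCay

/-- In the class of directed Cayley graphs, `L⁻(3) ≥ 48/4³`. -/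
theorem directed_diameter_three_asymptotic (ε : ℝ) (hε : 0 < ε) :
    ∃ D : ℕ, ∀ d : ℕ, D ≤ d →
      ∃ spec : CayleySpec 3,
        spec.S.card = d ∧
        ((48 / 4 ^ 3 : ℝ) - ε) * (d : ℝ) ^ 3 ≤ (Nat.card spec.G : ℝ) := by
  refine ⟨Nat.ceil (7 / ε) + 4, fun d hd => ?_⟩
  have hd4 : 4 ≤ d := by omega
  set m : ℕ := d / 4 with hm
  set r : ℕ := d % 4 with hr
  haveI : NeZero m := ⟨by omega⟩
  obtain ⟨spec, hcard, horder⟩ := DirCay.main_construction m r (by omega)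
  refine ⟨spec, by omega, ?_⟩
  rw [horder]
  have hdm : 4 * m + r = d := by omega
  have hr3 : r ≤ 3 := by omega
  have h4m : (d : ℝ) - 3 ≤ 4 * (m : ℝ) := by
    have h0 : ((4 * m + r : ℕ) : ℝ) = (d : ℝ) := by rw [hdm]
    push_cast at h0
    have hrr : (r : ℝ) ≤ 3 := by exact_mod_cast hr3
    linarith
  have hεd : 7 ≤ ε * (d : ℝ) := by
    have h1 : (7 / ε : ℝ) ≤ (⌈(7 / ε : ℝ)⌉₊ : ℝ) := Nat.le_ceil _
    have h2 : ((⌈(7 / ε : ℝ)⌉₊ : ℕ) : ℝ) ≤ (d : ℝ) := by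
      exact_mod_cast le_trans (Nat.le_add_right _ 4) hd
    have h3 : (7 / ε : ℝ) ≤ (d : ℝ) := le_trans h1 h2
    calc (7 : ℝ) = ε * (7 / ε) := by field_simp
    _ ≤ ε * d := mul_le_mul_of_nonneg_left h3 (le_of_lt hε)
  have hd3 : (3 : ℝ) ≤ (d : ℝ) := by
    have : (4 : ℝ) ≤ (d : ℝ) := by exact_mod_cast hd4
    linarith
  have hcube : ((d : ℝ) - 3) ^ 3 ≤ (4 * (m : ℝ)) ^ 3 :=
    pow_le_pow_left₀ (by linarith) h4m 3
  have hεd3 : 7 * (d : ℝ) ^ 2 ≤ ε * (d : ℝ) ^ 3 := by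
    have h5 := mul_le_mul_of_nonneg_right hεd (sq_nonneg (d : ℝ))
    calc 7 * (d : ℝ) ^ 2 ≤ ε * (d : ℝ) * (d : ℝ) ^ 2 := h5
    _ = ε * (d : ℝ) ^ 3 := by ring
  push_cast
  nlinarith [hcube, hεd3, hd3, sq_nonneg ((d : ℝ) - 3)]
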